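/- Let ℰ be a non-abelian extension of 𝒜 by ℬ with induced 2-cocycle (ω,ϖ,χ,μ,ρ_B,ρ_M). For (α,β) ∈ Aut(𝒜) × Aut(ℬ), define ω_{(α,β)}(x,y) = β₁ω(α₁⁻¹x,α₁⁻¹y), ϖ_{(α,β)}(x,v) = β₂ϖ(α₁⁻¹x,α₂⁻¹v), χ_{(α,β)}(v) = β₁χ(α₂⁻¹v), μ_{(α,β)}(v)a = β₂μ(α₂⁻¹v)β₁⁻¹(a), ρ_{B,(α,β)}(x)a = β₁(ρ_B(α₁⁻¹x)β₁⁻¹a), ρ_{M,(α,β)}(x)m = β₂(ρ_M(α₁⁻¹x)β₂⁻¹m). Then (ω_{(α,β)},ϖ_{(α,β)},χ_{(α,β)},μ_{(α,β)},ρ_{B,(α,β)},ρ_{M,(α,β)}) is again a non-abelian 2-cocycle on 𝒜 with values in ℬ. -/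
import Mathlib


universe u

section
variable (K : Type u) [Field K]

/-- A relative Rota-Baxter Lie algebra: a Lie algebra `A`, a representation `rep` of `A`
on `V`, and a relative Rota-Baxter operator `T : V → A`. -/
structure RelRB (A V : Type u) [AddCommGroup A] [Module K A]
    [AddCommGroup V] [Module K V] : Type u where
  br : A →ₗ[K] A →ₗ[K] A
  skew : ∀ x y, br x y + br y x = 0
  jacobi : ∀ x y z, br x (br y z) = br (br x y) z + br y (br x z)
  rep : A →ₗ[K] Module.End K V
  rep_br : ∀ x y, rep (br x y) = rep x * rep y - rep y * rep x
  T : V →ₗ[K] A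
  rb : ∀ u v, br (T u) (T v) = T (rep (T u) v - rep (T v) u)

variable {A V B M : Type u}
  [AddCommGroup A] [Module K A] [AddCommGroup V] [Module K V]
  [AddCommGroup B] [Module K B] [AddCommGroup M] [Module K M]

/-- A non-abelian 2-cocycle on `𝒜` with values in `ℬ`: identities (L1)-(L9). -/
def IsNACocycle (𝒜 : RelRB K A V) (ℬ : RelRB K B M)
    (ω : A → A → B) (ϖ : A → V → M) (χ : V → B)
    (μ : V → B → M) (ρB : A → B → B) (ρM : A → M → M) : Prop :=
  (∀ x y, ω x y + ω y x = 0) ∧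
  (∀ x y a, ρB x (ρB y a) - ρB y (ρB x a) - ρB (𝒜.br x y) a = ℬ.br (ω x y) a) ∧
  (∀ x y z, ρB x (ω y z) + ρB y (ω z x) + ρB z (ω x y)
      = ω (𝒜.br x y) z + ω (𝒜.br y z) x + ω (𝒜.br z x) y) ∧
  (∀ x y v, ϖ x (𝒜.rep y v) - ϖ y (𝒜.rep x v) - ϖ (𝒜.br x y) v
      = ρM y (ϖ x v) - ρM x (ϖ y v) - μ v (ω x y)) ∧
  (∀ x y m, ρM x (ρM y m) - ρM y (ρM x m) = ρM (𝒜.br x y) m + ℬ.rep (ω x y) m) ∧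
  (∀ x v a, ρM x (μ v a) - μ (𝒜.rep x v) a + ℬ.rep a (ϖ x v) = μ v (ρB x a)) ∧
  (∀ x a m, ρM x (ℬ.rep a m) - ℬ.rep a (ρM x m) = ℬ.rep (ρB x a) m) ∧
  (∀ v m, ρB (𝒜.T v) (ℬ.T m) + ℬ.br (χ v) (ℬ.T m)
      = ℬ.T (ρM (𝒜.T v) m + ℬ.rep (χ v) m + μ v (ℬ.T m))) ∧
  (∀ v₁ v₂, ρB (𝒜.T v₁) (χ v₂) - ρB (𝒜.T v₂) (χ v₁) + ℬ.br (χ v₁) (χ v₂)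
        + ω (𝒜.T v₁) (𝒜.T v₂)
      = ℬ.T (ϖ (𝒜.T v₁) v₂ - ϖ (𝒜.T v₂) v₁)
        + χ (𝒜.rep (𝒜.T v₁) v₂ - 𝒜.rep (𝒜.T v₂) v₁)
        + ℬ.T (μ v₁ (χ v₂) - μ v₂ (χ v₁)))
/-- A non-abelian extension of `𝒜` by `ℬ`: a relative Rota-Baxter Lie algebra `ℰ`
together with a short exact sequence `0 → ℬ → ℰ → 𝒜 → 0` of relative Rota-Baxter Lie
algebras. -/
structure ExtData {Ah Vh : Type u} [AddCommGroup Ah] [Module K Ah]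
    [AddCommGroup Vh] [Module K Vh]
    (𝒜 : RelRB K A V) (ℬ : RelRB K B M) (ℰ : RelRB K Ah Vh) : Type u where
  iB : B →ₗ[K] Ah
  iM : M →ₗ[K] Vh
  pA : Ah →ₗ[K] A
  pV : Vh →ₗ[K] V
  iB_br : ∀ a b, iB (ℬ.br a b) = ℰ.br (iB a) (iB b)
  iB_T : ∀ m, iB (ℬ.T m) = ℰ.T (iM m)
  i_rep : ∀ a m, iM (ℬ.rep a m) = ℰ.rep (iB a) (iM m)
  pA_br : ∀ x y, pA (ℰ.br x y) = 𝒜.br (pA x) (pA y)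
  p_T : ∀ vh, pA (ℰ.T vh) = 𝒜.T (pV vh)
  p_rep : ∀ x vh, pV (ℰ.rep x vh) = 𝒜.rep (pA x) (pV vh)
  iB_inj : Function.Injective iB
  iM_inj : Function.Injective iM
  pA_surj : Function.Surjective pA
  pV_surj : Function.Surjective pV
  exactA : ∀ x, pA x = 0 ↔ x ∈ Set.range iB
  exactV : ∀ v, pV v = 0 ↔ v ∈ Set.range iM
/-- The non-abelian 2-cocycle induced by a section `(sA, sV)` of a non-abelian extension:
`iB (ω x y) = [sA x, sA y] - sA [x,y]`, `iM (ϖ x v) = ρ̂(sA x)(sV v) - sV (ρ(x)v)`,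
`iB (χ v) = T̂(sV v) - sA (T v)`, `iM (μ v a) = -ρ̂(iB a)(sV v)`,
`iB (ρB x a) = [sA x, iB a]`, `iM (ρM x m) = ρ̂(sA x)(iM m)`. -/
def InducedCocycle {Ah Vh : Type u} [AddCommGroup Ah] [Module K Ah]
    [AddCommGroup Vh] [Module K Vh]
    {𝒜 : RelRB K A V} {ℬ : RelRB K B M} {ℰ : RelRB K Ah Vh}
    (E : ExtData K 𝒜 ℬ ℰ) (sA : A →ₗ[K] Ah) (sV : V →ₗ[K] Vh)
    (ω : A → A → B) (ϖ : A → V → M) (χ : V → B)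
    (μ : V → B → M) (ρB : A → B → B) (ρM : A → M → M) : Prop :=
  (∀ x y, E.iB (ω x y) = ℰ.br (sA x) (sA y) - sA (𝒜.br x y)) ∧
  (∀ x v, E.iM (ϖ x v) = ℰ.rep (sA x) (sV v) - sV (𝒜.rep x v)) ∧
  (∀ v, E.iB (χ v) = ℰ.T (sV v) - sA (𝒜.T v)) ∧
  (∀ v a, E.iM (μ v a) = - ℰ.rep (E.iB a) (sV v)) ∧
  (∀ x a, E.iB (ρB x a) = ℰ.br (sA x) (E.iB a)) ∧
  (∀ x m, E.iM (ρM x m) = ℰ.rep (sA x) (E.iM m))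
/-- Automorphism conditions for a pair of plain maps. -/
def IsAutFun (𝒜 : RelRB K A V) (f : A → A) (g : V → V) : Prop :=
  Function.Bijective f ∧ Function.Bijective g ∧
  (∀ x y, f (𝒜.br x y) = 𝒜.br (f x) (f y)) ∧
  (∀ v, f (𝒜.T v) = 𝒜.T (g v)) ∧
  (∀ x v, g (𝒜.rep x v) = 𝒜.rep (f x) (g v))
theorem induced_is_cocycle {Ah Vh : Type u}
    [AddCommGroup Ah] [Module K Ah] [AddCommGroup Vh] [Module K Vh]
    {𝒜 : RelRB K A V} {ℬ : RelRB K B M} {ℰ : RelRB K Ah Vh}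
    (E : ExtData K 𝒜 ℬ ℰ)
    (sA : A →ₗ[K] Ah) (sV : V →ₗ[K] Vh)
    (ω : A → A → B) (ϖ : A → V → M) (χ : V → B)
    (μ : V → B → M) (ρB : A → B → B) (ρM : A → M → M)
    (hcoc : InducedCocycle K E sA sV ω ϖ χ μ ρB ρM) :
    IsNACocycle K 𝒜 ℬ ω ϖ χ μ ρB ρM := by
  obtain ⟨hω, hϖ, hχ, hμ, hρB, hρM⟩ := hcoc
  refine ⟨?_, ?_, ?_, ?_, ?_, ?_, ?_, ?_, ?_⟩
  · -- L1
    intro x y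
    apply E.iB_inj
    simp only [map_add, map_sub, map_neg, map_zero, hω]
    have h2 : sA ((𝒜.br x) y) + sA ((𝒜.br y) x) = 0 := by
      rw [← map_add, 𝒜.skew, map_zero]
    linear_combination (norm := abel1) ℰ.skew (sA x) (sA y) - h2
  · -- L2
    intro x y a
    apply E.iB_inj
    simp only [map_add, map_sub, map_neg, map_zero, hρB, hω, E.iB_br,
      LinearMap.sub_apply, LinearMap.add_apply, map_sub, map_add]
    linear_combination (norm := abel1) ℰ.jacobi (sA x) (sA y) (E.iB a)
  · -- L3
    intro x y z
    apply E.iB_inj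
    simp only [map_add, map_sub, map_neg, map_zero, hρB, hω,
      LinearMap.sub_apply, LinearMap.add_apply]
    have s1 : (ℰ.br (sA y)) ((ℰ.br (sA x)) (sA z)) + (ℰ.br (sA y)) ((ℰ.br (sA z)) (sA x)) = 0 := by
      rw [← map_add, ℰ.skew, map_zero]
    have hJE : (ℰ.br (sA x)) ((ℰ.br (sA y)) (sA z)) + (ℰ.br (sA y)) ((ℰ.br (sA z)) (sA x))
        + (ℰ.br (sA z)) ((ℰ.br (sA x)) (sA y)) = 0 := by
      linear_combination (norm := abel1) ℰ.jacobi (sA x) (sA y) (sA z) + s1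
        + ℰ.skew ((ℰ.br (sA x)) (sA y)) (sA z)
    have sA1 : (𝒜.br y) ((𝒜.br x) z) + (𝒜.br y) ((𝒜.br z) x) = 0 := by
      rw [← map_add, 𝒜.skew, map_zero]
    have hA : (𝒜.br ((𝒜.br x) y)) z + (𝒜.br ((𝒜.br y) z)) x + (𝒜.br ((𝒜.br z) x)) y = 0 := by
      linear_combination (norm := abel1) - 𝒜.jacobi x y z - sA1 + 𝒜.skew ((𝒜.br y) z) x + 𝒜.skew ((𝒜.br z) x) y
    have hJA : sA ((𝒜.br ((𝒜.br x) y)) z) + sA ((𝒜.br ((𝒜.br y) z)) x)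
        + sA ((𝒜.br ((𝒜.br z) x)) y) = 0 := by
      rw [← map_add, ← map_add, hA, map_zero]
    linear_combination (norm := abel1) hJE - ℰ.skew (sA x) (sA ((𝒜.br y) z))
      - ℰ.skew (sA y) (sA ((𝒜.br z) x)) - ℰ.skew (sA z) (sA ((𝒜.br x) y)) + hJA
  · -- L4
    intro x y v
    apply E.iM_inj
    simp only [map_add, map_sub, map_neg, map_zero, hϖ, hρM, hμ, hω,
      LinearMap.sub_apply, LinearMap.add_apply]
    have f1 : sV ((𝒜.rep ((𝒜.br x) y)) v)
        = sV ((𝒜.rep x) ((𝒜.rep y) v)) - sV ((𝒜.rep y) ((𝒜.rep x) v)) := by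
      rw [𝒜.rep_br]
      simp only [LinearMap.sub_apply, Module.End.mul_apply, map_sub]
    have f2 : (ℰ.rep ((ℰ.br (sA x)) (sA y))) (sV v)
        = (ℰ.rep (sA x)) ((ℰ.rep (sA y)) (sV v)) - (ℰ.rep (sA y)) ((ℰ.rep (sA x)) (sV v)) := by
      rw [ℰ.rep_br]
      simp only [LinearMap.sub_apply, Module.End.mul_apply]
    linear_combination (norm := abel1) f1 - f2
  · -- L5
    intro x y m
    apply E.iM_inj
    simp only [map_add, map_sub, map_neg, map_zero, hρM, hω, E.i_rep,
      LinearMap.sub_apply, LinearMap.add_apply]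
    have f2 : (ℰ.rep ((ℰ.br (sA x)) (sA y))) (E.iM m)
        = (ℰ.rep (sA x)) ((ℰ.rep (sA y)) (E.iM m)) - (ℰ.rep (sA y)) ((ℰ.rep (sA x)) (E.iM m)) := by
      rw [ℰ.rep_br]
      simp only [LinearMap.sub_apply, Module.End.mul_apply]
    linear_combination (norm := abel1) -f2
  · -- L6
    intro x v a
    apply E.iM_inj
    simp only [map_add, map_sub, map_neg, map_zero, hρM, hμ, hϖ, hρB, E.i_rep,
      LinearMap.sub_apply, LinearMap.add_apply]
    have f : (ℰ.rep ((ℰ.br (sA x)) (E.iB a))) (sV v)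
        = (ℰ.rep (sA x)) ((ℰ.rep (E.iB a)) (sV v)) - (ℰ.rep (E.iB a)) ((ℰ.rep (sA x)) (sV v)) := by
      rw [ℰ.rep_br]
      simp only [LinearMap.sub_apply, Module.End.mul_apply]
    linear_combination (norm := abel1) f
  · -- L7
    intro x a m
    apply E.iM_inj
    simp only [map_add, map_sub, map_neg, map_zero, hρM, hρB, E.i_rep,
      LinearMap.sub_apply, LinearMap.add_apply]
    have f : (ℰ.rep ((ℰ.br (sA x)) (E.iB a))) (E.iM m)
        = (ℰ.rep (sA x)) ((ℰ.rep (E.iB a)) (E.iM m)) - (ℰ.rep (E.iB a)) ((ℰ.rep (sA x)) (E.iM m)) := by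
      rw [ℰ.rep_br]
      simp only [LinearMap.sub_apply, Module.End.mul_apply]
    linear_combination (norm := abel1) -f
  · -- L8
    intro v m
    apply E.iB_inj
    simp only [map_add, map_sub, map_neg, map_zero, hρB, hχ, hρM, hμ, E.iB_br, E.iB_T,
      E.i_rep, LinearMap.sub_apply, LinearMap.add_apply]
    have f : (ℰ.br (ℰ.T (sV v))) (ℰ.T (E.iM m))
        = ℰ.T ((ℰ.rep (ℰ.T (sV v))) (E.iM m)) - ℰ.T ((ℰ.rep (ℰ.T (E.iM m))) (sV v)) := by
      rw [ℰ.rb, map_sub]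
    linear_combination (norm := abel1) f
  · -- L9
    intro v₁ v₂
    apply E.iB_inj
    simp only [map_add, map_sub, map_neg, map_zero, hρB, hχ, hω, hϖ, hμ, E.iB_br, E.iB_T,
      LinearMap.sub_apply, LinearMap.add_apply]
    have g1 : (ℰ.br (ℰ.T (sV v₁))) (ℰ.T (sV v₂))
        = ℰ.T ((ℰ.rep (ℰ.T (sV v₁))) (sV v₂)) - ℰ.T ((ℰ.rep (ℰ.T (sV v₂))) (sV v₁)) := by
      rw [ℰ.rb, map_sub]
    have g2 : sA ((𝒜.br (𝒜.T v₁)) (𝒜.T v₂))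
        = sA (𝒜.T ((𝒜.rep (𝒜.T v₁)) v₂)) - sA (𝒜.T ((𝒜.rep (𝒜.T v₂)) v₁)) := by
      rw [𝒜.rb]
      simp only [map_sub]
    linear_combination (norm := abel1) g1 - g2 + ℰ.skew (sA (𝒜.T v₁)) (sA (𝒜.T v₂))
      - ℰ.skew (sA (𝒜.T v₂)) (ℰ.T (sV v₁))


/-- Twist an extension datum by a pair of automorphisms. -/
def twistExt {Ah Vh : Type u} [AddCommGroup Ah] [Module K Ah]
    [AddCommGroup Vh] [Module K Vh]
    {𝒜 : RelRB K A V} {ℬ : RelRB K B M} {ℰ : RelRB K Ah Vh}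
    (E : ExtData K 𝒜 ℬ ℰ)
    (α₁ : A ≃ₗ[K] A) (α₂ : V ≃ₗ[K] V) (β₁ : B ≃ₗ[K] B) (β₂ : M ≃ₗ[K] M)
    (hαbr : ∀ x y, α₁ (𝒜.br x y) = 𝒜.br (α₁ x) (α₁ y))
    (hαT : ∀ v, α₁ (𝒜.T v) = 𝒜.T (α₂ v))
    (hαrep : ∀ x v, α₂ (𝒜.rep x v) = 𝒜.rep (α₁ x) (α₂ v))
    (hβbr' : ∀ a b, β₁.symm (ℬ.br a b) = ℬ.br (β₁.symm a) (β₁.symm b))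
    (hβT' : ∀ m, β₁.symm (ℬ.T m) = ℬ.T (β₂.symm m))
    (hβrep' : ∀ a m, β₂.symm (ℬ.rep a m) = ℬ.rep (β₁.symm a) (β₂.symm m)) :
    ExtData K 𝒜 ℬ ℰ where
  iB := E.iB ∘ₗ β₁.symm.toLinearMap
  iM := E.iM ∘ₗ β₂.symm.toLinearMap
  pA := α₁.toLinearMap ∘ₗ E.pA
  pV := α₂.toLinearMap ∘ₗ E.pV
  iB_br := by
    intro a b
    simp only [LinearMap.comp_apply, LinearEquiv.coe_coe]
    rw [hβbr', E.iB_br]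
  iB_T := by
    intro m
    simp only [LinearMap.comp_apply, LinearEquiv.coe_coe]
    rw [hβT', E.iB_T]
  i_rep := by
    intro a m
    simp only [LinearMap.comp_apply, LinearEquiv.coe_coe]
    rw [hβrep', E.i_rep]
  pA_br := by
    intro x y
    simp only [LinearMap.comp_apply, LinearEquiv.coe_coe]
    rw [E.pA_br, hαbr]
  p_T := by
    intro vh
    simp only [LinearMap.comp_apply, LinearEquiv.coe_coe]
    rw [E.p_T, hαT]
  p_rep := by
    intro x vh
    simp only [LinearMap.comp_apply, LinearEquiv.coe_coe]
    rw [E.p_rep, hαrep]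
  iB_inj := by
    simp only [LinearMap.coe_comp, LinearEquiv.coe_coe]
    exact E.iB_inj.comp β₁.symm.injective
  iM_inj := by
    simp only [LinearMap.coe_comp, LinearEquiv.coe_coe]
    exact E.iM_inj.comp β₂.symm.injective
  pA_surj := by
    simp only [LinearMap.coe_comp, LinearEquiv.coe_coe]
    exact α₁.surjective.comp E.pA_surj
  pV_surj := by
    simp only [LinearMap.coe_comp, LinearEquiv.coe_coe]
    exact α₂.surjective.comp E.pV_surj
  exactA := by
    intro x
    simp only [LinearMap.coe_comp, LinearEquiv.coe_coe, Function.comp_apply,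
      Set.range_comp, β₁.symm.surjective.range_eq, Set.image_univ,
      LinearEquiv.map_eq_zero_iff]
    exact E.exactA x
  exactV := by
    intro v
    simp only [LinearMap.coe_comp, LinearEquiv.coe_coe, Function.comp_apply,
      Set.range_comp, β₂.symm.surjective.range_eq, Set.image_univ,
      LinearEquiv.map_eq_zero_iff]
    exact E.exactV v


/-- the twist of the induced non-abelian 2-cocycle by a pair of
automorphisms `(α,β)` is again a non-abelian 2-cocycle on `𝒜` with values in `ℬ`. -/
theorem twisted_cocycle_is_cocycle {Ah Vh : Type u}
    [AddCommGroup Ah] [Module K Ah] [AddCommGroup Vh] [Module K Vh]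
    (𝒜 : RelRB K A V) (ℬ : RelRB K B M) (ℰ : RelRB K Ah Vh)
    (E : ExtData K 𝒜 ℬ ℰ)
    (sA : A →ₗ[K] Ah) (sV : V →ₗ[K] Vh)
    (hsA : ∀ x, E.pA (sA x) = x) (hsV : ∀ v, E.pV (sV v) = v)
    (ω : A → A → B) (ϖ : A → V → M) (χ : V → B)
    (μ : V → B → M) (ρB : A → B → B) (ρM : A → M → M)
    (hcoc : InducedCocycle K E sA sV ω ϖ χ μ ρB ρM)
    (α₁ : A ≃ₗ[K] A) (α₂ : V ≃ₗ[K] V)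
    (hα : IsAutFun K 𝒜 (fun x => α₁ x) (fun v => α₂ v))
    (β₁ : B ≃ₗ[K] B) (β₂ : M ≃ₗ[K] M)
    (hβ : IsAutFun K ℬ (fun a => β₁ a) (fun m => β₂ m)) :
    IsNACocycle K 𝒜 ℬ
      (fun x y => β₁ (ω (α₁.symm x) (α₁.symm y)))
      (fun x v => β₂ (ϖ (α₁.symm x) (α₂.symm v)))
      (fun v => β₁ (χ (α₂.symm v)))
      (fun v a => β₂ (μ (α₂.symm v) (β₁.symm a)))
      (fun x a => β₁ (ρB (α₁.symm x) (β₁.symm a)))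
      (fun x m => β₂ (ρM (α₁.symm x) (β₂.symm m))) := by
  obtain ⟨hω, hϖ, hχ, hμ, hρB, hρM⟩ := hcoc
  have hαbr : ∀ x y, α₁ (𝒜.br x y) = 𝒜.br (α₁ x) (α₁ y) := hα.2.2.1
  have hαT : ∀ v, α₁ (𝒜.T v) = 𝒜.T (α₂ v) := hα.2.2.2.1
  have hαrep : ∀ x v, α₂ (𝒜.rep x v) = 𝒜.rep (α₁ x) (α₂ v) := hα.2.2.2.2
  have hβbr : ∀ a b, β₁ (ℬ.br a b) = ℬ.br (β₁ a) (β₁ b) := hβ.2.2.1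
  have hβT : ∀ m, β₁ (ℬ.T m) = ℬ.T (β₂ m) := hβ.2.2.2.1
  have hβrep : ∀ a m, β₂ (ℬ.rep a m) = ℬ.rep (β₁ a) (β₂ m) := hβ.2.2.2.2
  have hαbr' : ∀ x y, α₁.symm (𝒜.br x y) = 𝒜.br (α₁.symm x) (α₁.symm y) := by
    intro x y; apply α₁.injective
    rw [hαbr, α₁.apply_symm_apply, α₁.apply_symm_apply, α₁.apply_symm_apply]
  have hαT' : ∀ v, α₁.symm (𝒜.T v) = 𝒜.T (α₂.symm v) := by
    intro v; apply α₁.injective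
    rw [hαT, α₂.apply_symm_apply, α₁.apply_symm_apply]
  have hαrep' : ∀ x v, α₂.symm (𝒜.rep x v) = 𝒜.rep (α₁.symm x) (α₂.symm v) := by
    intro x v; apply α₂.injective
    rw [hαrep, α₁.apply_symm_apply, α₂.apply_symm_apply, α₂.apply_symm_apply]
  have hβbr' : ∀ a b, β₁.symm (ℬ.br a b) = ℬ.br (β₁.symm a) (β₁.symm b) := by
    intro a b; apply β₁.injective
    rw [hβbr, β₁.apply_symm_apply, β₁.apply_symm_apply, β₁.apply_symm_apply]
  have hβT' : ∀ m, β₁.symm (ℬ.T m) = ℬ.T (β₂.symm m) := by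
    intro m; apply β₁.injective
    rw [hβT, β₂.apply_symm_apply, β₁.apply_symm_apply]
  have hβrep' : ∀ a m, β₂.symm (ℬ.rep a m) = ℬ.rep (β₁.symm a) (β₂.symm m) := by
    intro a m; apply β₂.injective
    rw [hβrep, β₁.apply_symm_apply, β₂.apply_symm_apply, β₂.apply_symm_apply]
  refine induced_is_cocycle K
    (twistExt K E α₁ α₂ β₁ β₂ hαbr hαT hαrep hβbr' hβT' hβrep')
    (sA ∘ₗ α₁.symm.toLinearMap) (sV ∘ₗ α₂.symm.toLinearMap)
    _ _ _ _ _ _ ⟨?_, ?_, ?_, ?_, ?_, ?_⟩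
  · intro x y
    show E.iB (β₁.symm (β₁ (ω (α₁.symm x) (α₁.symm y))))
      = ℰ.br (sA (α₁.symm x)) (sA (α₁.symm y)) - sA (α₁.symm (𝒜.br x y))
    rw [β₁.symm_apply_apply, hω, hαbr']
  · intro x v
    show E.iM (β₂.symm (β₂ (ϖ (α₁.symm x) (α₂.symm v))))
      = ℰ.rep (sA (α₁.symm x)) (sV (α₂.symm v)) - sV (α₂.symm (𝒜.rep x v))
    rw [β₂.symm_apply_apply, hϖ, hαrep']
  · intro v
    show E.iB (β₁.symm (β₁ (χ (α₂.symm v))))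
      = ℰ.T (sV (α₂.symm v)) - sA (α₁.symm (𝒜.T v))
    rw [β₁.symm_apply_apply, hχ, hαT']
  · intro v a
    show E.iM (β₂.symm (β₂ (μ (α₂.symm v) (β₁.symm a))))
      = - ℰ.rep (E.iB (β₁.symm a)) (sV (α₂.symm v))
    rw [β₂.symm_apply_apply, hμ]
  · intro x a
    show E.iB (β₁.symm (β₁ (ρB (α₁.symm x) (β₁.symm a))))
      = ℰ.br (sA (α₁.symm x)) (E.iB (β₁.symm a))
    rw [β₁.symm_apply_apply, hρB]
  · intro x m
    show E.iM (β₂.symm (β₂ (ρM (α₁.symm x) (β₂.symm m))))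
      = ℰ.rep (sA (α₁.symm x)) (E.iM (β₂.symm m))
    rw [β₂.symm_apply_apply, hρM]


end
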